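/- Let t ∈ ℓ¹ and let x, y ∈ [[0,t]]_sp. Then either x ∈ [[0,y]]_sp or y ∈ [[0,x]]_sp; that is, the stick-breaking path [[0,t]]_sp is totally ordered by the ancestor relation x ⪯ y ⇔ x ∈ [[0,y]]_sp. -/

import Mathlib

set_option synthInstance.maxHeartbeats 1000000


/-- `ℓ¹`, the Banach space of absolutely summable real sequences. -/
noncomputable abbrev Ell1 : Type := lp (fun _ : ℕ => ℝ) 1

/-- Coordinate truncation keeping the first `m` coordinates. -/
noncomputable def trunc (m : ℕ) (x : Ell1) : Ell1 :=
  ⟨fun i => if i < m then x i else 0, by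
    refine Memℓp.of_exponent_ge (memℓp_zero ?_) (zero_le)
    refine Set.Finite.subset (Set.finite_Iio m) ?_
    intro i hi
    simp only [Set.mem_setOf_eq] at hi
    by_contra h
    simp only [Set.mem_Iio, not_lt] at h
    exact hi (if_neg (not_lt.mpr h))⟩

/-- The open stick-breaking path `[[0,x]]°_sp`. -/
def stickCore (x : Ell1) : Set Ell1 :=
  ⋃ m : ℕ, {y | ∃ s ∈ Set.Icc (0 : ℝ) 1, y = (1 - s) • trunc m x + s • trunc (m + 1) x}

/-- The stick-breaking path `[[0,x]]_sp`, the closure of `[[0,x]]°_sp` in `ℓ¹`. -/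
noncomputable def stickPath (x : Ell1) : Set Ell1 :=
  closure (stickCore x)

lemma trunc_apply (m : ℕ) (x : Ell1) (i : ℕ) : trunc m x i = if i < m then x i else 0 := rfl

lemma ell1_ext {a b : Ell1} (h : ∀ i, a i = b i) : a = b := by
  apply Subtype.ext; funext i; exact h i

lemma comb_apply (s : ℝ) (a b : Ell1) (i : ℕ) :
    ((1 - s) • a + s • b) i = (1 - s) * a i + s * b i := by
  simp [lp.coeFn_add, lp.coeFn_smul]; rfl

/-- coordinates of a core point -/
lemma core_pt_apply (t : Ell1) (m : ℕ) (s : ℝ) (i : ℕ) :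
    ((1 - s) • trunc m t + s • trunc (m + 1) t) i
      = if i < m then t i else if i = m then s * t i else 0 := by
  rw [comb_apply, trunc_apply, trunc_apply]
  rcases lt_trichotomy i m with h | h | h
  · simp [h, h.trans (Nat.lt_succ_self m), h.ne]; ring
  · simp [h]
  · simp [Nat.lt_irrefl, not_lt.mpr h.le, not_lt.mpr (Nat.succ_le_of_lt h), h.ne', Nat.succ_le_of_lt h,
      not_lt.mpr (Nat.succ_le_of_lt h)]

lemma trunc_core_of_le (t : Ell1) (m : ℕ) (s : ℝ) {k : ℕ} (hk : k ≤ m) :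
    trunc k ((1 - s) • trunc m t + s • trunc (m + 1) t) = trunc k t := by
  apply ell1_ext; intro i
  rw [trunc_apply, trunc_apply, core_pt_apply]
  by_cases h : i < k
  · simp [h, h.trans_le hk]
  · simp [h]

lemma trunc_core_of_gt (t : Ell1) (m : ℕ) (s : ℝ) {k : ℕ} (hk : m + 1 ≤ k) :
    trunc k ((1 - s) • trunc m t + s • trunc (m + 1) t)
      = (1 - s) • trunc m t + s • trunc (m + 1) t := by
  apply ell1_ext; intro i
  rw [trunc_apply, core_pt_apply]
  by_cases h : i < k
  · simp [h]
  · have hmi : m < i := lt_of_lt_of_le (Nat.lt_of_succ_le hk) (not_lt.mp h)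
    simp [h, not_lt.mpr hmi.le, hmi.ne']

lemma mem_stickCore (t : Ell1) (m : ℕ) {s : ℝ} (hs : s ∈ Set.Icc (0:ℝ) 1) :
    (1 - s) • trunc m t + s • trunc (m + 1) t ∈ stickCore t :=
  Set.mem_iUnion.2 ⟨m, ⟨s, hs, rfl⟩⟩

/-- comparability on the core -/
lemma core_le (t : Ell1) (m n : ℕ) (s u : ℝ) (hs : s ∈ Set.Icc (0:ℝ) 1)
    (hu : u ∈ Set.Icc (0:ℝ) 1) (h : m < n ∨ (m = n ∧ s ≤ u)) :
    (1 - s) • trunc m t + s • trunc (m + 1) t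
      ∈ stickCore ((1 - u) • trunc n t + u • trunc (n + 1) t) := by
  set y := (1 - u) • trunc n t + u • trunc (n + 1) t with hy
  rcases h with h | ⟨rfl, hsu⟩
  · have h1 : trunc m y = trunc m t := trunc_core_of_le t n u (le_of_lt h)
    have h2 : trunc (m + 1) y = trunc (m + 1) t := trunc_core_of_le t n u h
    refine Set.mem_iUnion.2 ⟨m, ⟨s, hs, ?_⟩⟩
    rw [h1, h2]
  · have h1 : trunc m y = trunc m t := trunc_core_of_le t m u le_rfl
    have h2 : trunc (m + 1) y = y := trunc_core_of_gt t m u le_rfl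
    rcases eq_or_lt_of_le hu.1 with hu0 | hu0
    · -- u = 0, so s = 0
      have hs0 : s = 0 := le_antisymm (hsu.trans hu0.symm.le) hs.1
      refine Set.mem_iUnion.2 ⟨m, ⟨0, ⟨le_rfl, zero_le_one⟩, ?_⟩⟩
      rw [h1, h2, hs0, hy, ← hu0]
      module
    · refine Set.mem_iUnion.2 ⟨m, ⟨s / u, ⟨div_nonneg hs.1 hu0.le, div_le_one_of_le₀ hsu hu0.le⟩, ?_⟩⟩
      rw [h1, h2, hy]
      have : s / u * u = s := div_mul_cancel₀ s hu0.ne'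
      match_scalars <;> field_simp <;> ring

/-- the tail norm -/
lemma hasSum_tail (t : Ell1) (N : ℕ) :
    HasSum (fun i => if i < N then 0 else ‖t i‖) ‖t - trunc N t‖ := by
  have h := lp.hasSum_norm (p := 1) (by norm_num) (t - trunc N t)
  simp only [ENNReal.toReal_one, Real.rpow_one] at h
  convert h using 2 with i
  rw [lp.coeFn_sub, Pi.sub_apply, trunc_apply]
  by_cases hi : i < N <;> simp [hi]

lemma tail_eq (t : Ell1) (N : ℕ) :
    ‖t - trunc N t‖ = ‖t‖ - ∑ i ∈ Finset.range N, ‖t i‖ := by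
  have h1 := hasSum_tail t N
  have h2 : HasSum (fun i => if i < N then ‖t i‖ else 0) (∑ i ∈ Finset.range N, ‖t i‖) := by
    have h := hasSum_sum_of_ne_finset_zero (L := SummationFilter.unconditional ℕ) (s := Finset.range N)
      (f := fun i => if i < N then ‖t i‖ else 0)
      (by intro i hi; simp only [Finset.mem_range, not_lt] at hi; simp [not_lt.mpr hi])
    have he : ∑ i ∈ Finset.range N, (if i < N then ‖t i‖ else 0)
        = ∑ i ∈ Finset.range N, ‖t i‖ :=
      Finset.sum_congr rfl (fun i hi => by simp [Finset.mem_range.mp hi])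
    rwa [he] at h
  have h3 := lp.hasSum_norm (p := 1) (by norm_num) t
  simp only [ENNReal.toReal_one, Real.rpow_one] at h3
  have h4 := h1.add h2
  have h5 : (fun i => (if i < N then 0 else ‖t i‖) + if i < N then ‖t i‖ else 0)
      = fun i => ‖t i‖ := by funext i; by_cases hi : i < N <;> simp [hi]
  rw [h5] at h4
  have := h3.unique h4
  linarith

lemma tail_antitone (t : Ell1) : Antitone (fun N => ‖t - trunc N t‖) := by
  intro a b hab
  simp only [tail_eq]
  have : ∑ i ∈ Finset.range a, ‖t i‖ ≤ ∑ i ∈ Finset.range b, ‖t i‖ :=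
    Finset.sum_le_sum_of_subset_of_nonneg (Finset.range_subset_range.2 hab)
      (fun i _ _ => norm_nonneg _)
  linarith

lemma tail_tendsto (t : Ell1) :
    Filter.Tendsto (fun N => ‖t - trunc N t‖) Filter.atTop (nhds 0) := by
  have h3 := lp.hasSum_norm (p := 1) (by norm_num) t
  simp only [ENNReal.toReal_one, Real.rpow_one] at h3
  have := h3.tendsto_sum_nat
  simp only [tail_eq]
  have := Filter.Tendsto.sub (tendsto_const_nhds (x := ‖t‖)) this
  simpa using this

lemma seg_compact (a b : Ell1) :
    IsCompact {z : Ell1 | ∃ s ∈ Set.Icc (0:ℝ) 1, z = (1 - s) • a + s • b} := by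
  have h : {z : Ell1 | ∃ s ∈ Set.Icc (0:ℝ) 1, z = (1 - s) • a + s • b}
      = (fun s : ℝ => (1 - s) • a + s • b) '' Set.Icc 0 1 := by
    ext z
    simp only [Set.mem_setOf_eq, Set.mem_image]
    exact ⟨fun ⟨s, hs, h⟩ => ⟨s, hs, h.symm⟩, fun ⟨s, hs, h⟩ => ⟨s, hs, h.symm⟩⟩
  rw [h]
  exact isCompact_Icc.image (by fun_prop)

lemma stickPath_subset (t : Ell1) : stickPath t ⊆ stickCore t ∪ {t} := by
  intro z hz
  by_cases hzt : z = t
  · exact Or.inr hzt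
  · left
    have hd : 0 < ‖z - t‖ := by
      rw [norm_pos_iff]; exact sub_ne_zero.mpr hzt
    obtain ⟨N, hN⟩ : ∃ N, ‖t - trunc N t‖ < ‖z - t‖ := by
      have := (tail_tendsto t).eventually (eventually_lt_nhds hd)
      exact this.exists
    set K : Set Ell1 := ⋃ m ∈ Finset.range N,
      {w : Ell1 | ∃ s ∈ Set.Icc (0:ℝ) 1, w = (1 - s) • trunc m t + s • trunc (m + 1) t}
      with hKdef
    have hK : IsCompact K := (Finset.range N).isCompact_biUnion (fun m _ => seg_compact _ _)
    have hB : IsClosed (Metric.closedBall t ‖t - trunc N t‖) := Metric.isClosed_closedBall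
    have hsub : stickCore t ⊆ K ∪ Metric.closedBall t ‖t - trunc N t‖ := by
      rintro w hw
      rw [stickCore, Set.mem_iUnion] at hw
      obtain ⟨m, s, hs, rfl⟩ := hw
      by_cases hm : m < N
      · exact Or.inl (Set.mem_biUnion (Finset.mem_range.2 hm) ⟨s, hs, rfl⟩)
      · right
        push_neg at hm
        rw [Metric.mem_closedBall, dist_eq_norm]
        have heq : (1 - s) • trunc m t + s • trunc (m + 1) t - t
            = (1 - s) • (trunc m t - t) + s • (trunc (m + 1) t - t) := by module
        rw [heq]
        have h1 : ‖trunc m t - t‖ ≤ ‖t - trunc N t‖ := by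
          rw [norm_sub_rev]; exact tail_antitone t hm
        have h2 : ‖trunc (m + 1) t - t‖ ≤ ‖t - trunc N t‖ := by
          rw [norm_sub_rev]; exact tail_antitone t (hm.trans (Nat.le_succ m))
        calc ‖(1 - s) • (trunc m t - t) + s • (trunc (m + 1) t - t)‖
            ≤ ‖(1 - s) • (trunc m t - t)‖ + ‖s • (trunc (m + 1) t - t)‖ := norm_add_le _ _
          _ = (1 - s) * ‖trunc m t - t‖ + s * ‖trunc (m + 1) t - t‖ := by
              rw [norm_smul, norm_smul, Real.norm_eq_abs, Real.norm_eq_abs,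
                abs_of_nonneg (by linarith [hs.2]), abs_of_nonneg hs.1]
          _ ≤ (1 - s) * ‖t - trunc N t‖ + s * ‖t - trunc N t‖ := by
              have := hs.1; have := hs.2
              gcongr <;> linarith
          _ = ‖t - trunc N t‖ := by ring
    have hz2 := (closure_minimal hsub (hK.isClosed.union hB)) hz
    rcases hz2 with hz2 | hz2
    · rw [hKdef, Set.mem_iUnion] at hz2
      obtain ⟨m, hm⟩ := hz2
      rw [Set.mem_iUnion] at hm
      obtain ⟨_, hm⟩ := hm
      exact Set.mem_iUnion.2 ⟨m, hm⟩
    · rw [Metric.mem_closedBall, dist_eq_norm] at hz2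
      exact absurd hN (not_lt.mpr hz2)

/-- a stick-breaking path is totally ordered by the ancestor relation
`x ⪯ y ⇔ x ∈ [[0,y]]_sp`. -/
theorem stickPath_total (t x y : Ell1) (hx : x ∈ stickPath t) (hy : y ∈ stickPath t) :
    x ∈ stickPath y ∨ y ∈ stickPath x := by
  rcases stickPath_subset t hx with hx' | hx'
  · rcases stickPath_subset t hy with hy' | hy'
    · rw [stickCore, Set.mem_iUnion] at hx' hy'
      obtain ⟨m, s, hs, rfl⟩ := hx'
      obtain ⟨n, u, hu, rfl⟩ := hy'
      rcases lt_trichotomy m n with h | h | h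
      · exact Or.inl (subset_closure (core_le t m n s u hs hu (Or.inl h)))
      · rcases le_total s u with h2 | h2
        · exact Or.inl (subset_closure (core_le t m n s u hs hu (Or.inr ⟨h, h2⟩)))
        · exact Or.inr (subset_closure (core_le t n m u s hu hs (Or.inr ⟨h.symm, h2⟩)))
      · exact Or.inr (subset_closure (core_le t n m u s hu hs (Or.inl h)))
    · rw [Set.mem_singleton_iff] at hy'; subst hy'; exact Or.inl hx
  · rw [Set.mem_singleton_iff] at hx'; subst hx'; exact Or.inr hy
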